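/- Let D = diag(λ₁,…,λₙ) be a diagonal n×n complex matrix with λ_k > 0 for all k and Σ_{k=1}^n λ_k = 1, let f ∈ F_op, and let A⁽¹⁾,…,A⁽ᴺ⁾ be Hermitian n×n complex matrices. Then det(qCov^{s}_{D,f}) ≥ det(qCov^{as}_{D,f}), where qCov^{s}_{D,f} = Cov_{D,g_f^{s}} and qCov^{as}_{D,f} = Cov_{D,g_f^{as}}. -/

import Mathlib

open ComplexOrder Matrix

/-- The diagonal density matrix `D = diag(λ₁,…,λₙ)`. -/
noncomputable def Dmat {n : ℕ} (lam : Fin n → ℝ) : Matrix (Fin n) (Fin n) ℂ :=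
  Matrix.diagonal fun k => (lam k : ℂ)

/-- `A₀ = A - Tr(D A)·I`. -/
noncomputable def cent {n : ℕ} (lam : Fin n → ℝ) (A : Matrix (Fin n) (Fin n) ℂ) :
    Matrix (Fin n) (Fin n) ℂ :=
  A - (Dmat lam * A).trace • (1 : Matrix (Fin n) (Fin n) ℂ)

/-- The `N×N` covariance matrix `[Cov_{D,g}]_{ij} = (A⁽ⁱ⁾₀, A⁽ʲ⁾₀)_{D,g}` where
`(A,B)_{D,g} = Σ_{k,l} A_{lk}·B_{kl}·g(λ_k,λ_l)`. -/
noncomputable def covM {n N : ℕ} (lam : Fin n → ℝ) (g : ℝ → ℝ → ℝ)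
    (A : Fin N → Matrix (Fin n) (Fin n) ℂ) : Matrix (Fin N) (Fin N) ℂ :=
  Matrix.of fun i j =>
    ∑ k, ∑ l, (g (lam k) (lam l) : ℂ) * cent lam (A i) l k * cent lam (A j) k l
/-- `f ∈ F_op`: `f : (0,∞) → (0,∞)` is operator monotone (via the continuous functional
calculus on Hermitian matrices, with the Loewner order expressed through `PosSemidef`),
satisfies `f(x) = x·f(1/x)` for `x > 0`, and `f(1) = 1`. -/
structure IsFop (f : ℝ → ℝ) : Prop where
  pos : ∀ x : ℝ, 0 < x → 0 < f x
  opMono : ∀ (m : ℕ) (X Y : Matrix (Fin m) (Fin m) ℂ), X.PosSemidef → Y.PosSemidef →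
    (Y - X).PosSemidef → (cfc f Y - cfc f X).PosSemidef
  funcEq : ∀ x : ℝ, 0 < x → f x = x * f x⁻¹
  normalized : f 1 = 1

/-- `f(0) = lim_{t→0⁺} f(t)`. -/
def IsFzero (f : ℝ → ℝ) (f0 : ℝ) : Prop :=
  Filter.Tendsto f (nhdsWithin 0 (Set.Ioi 0)) (nhds f0)

/-- `m_f(x,y) = y·f(x/y)`. -/
noncomputable def mfun (f : ℝ → ℝ) (x y : ℝ) : ℝ := y * f (x / y)

/-- `g_cl(x,y) = (x+y)/2`. -/
noncomputable def gcl (x y : ℝ) : ℝ := (x + y) / 2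

/-- `g_f^{as}(x,y) = f(0)·(x−y)²/(2·m_f(x,y))`. -/
noncomputable def gas (f : ℝ → ℝ) (f0 : ℝ) (x y : ℝ) : ℝ :=
  f0 * (x - y) ^ 2 / (2 * mfun f x y)

/-- `g_f^{s}(x,y) = f(0)·(x+y)²/(2·m_f(x,y))`. -/
noncomputable def gs (f : ℝ → ℝ) (f0 : ℝ) (x y : ℝ) : ℝ :=
  f0 * (x + y) ^ 2 / (2 * mfun f x y)

/-! `g_f^s − g_f^as = 2 f(0) x y / m_f(x,y)` is nonnegative on the spectrum of `D`, and for a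
nonnegative weight `g` the matrix `Cov_{D,g}` is a nonnegative combination of rank-one matrices
`v vᴴ`, hence positive semidefinite. So `qCov^s = qCov^as + P` with both summands positive
semidefinite, and the determinant is monotone on such matrices: for `A` positive definite,
`det (A + P) = det A · det (1 + A^{-1/2} P A^{-1/2}) ≥ det A`, and for singular `A`,
`det A = 0 ≤ det (A + P)`. -/

open scoped MatrixOrder

namespace Matrix

variable {n 𝕜 : Type*} [Fintype n] [DecidableEq n] [RCLike 𝕜]

lemma PosSemidef.one_le_det_one_add {C : Matrix n n 𝕜} (hC : C.PosSemidef) :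
    1 ≤ (1 + C).det := by
  have hC' : IsSelfAdjoint C := hC.1
  have h : 1 + C = cfc (fun x : ℝ => 1 + x) C := by
    rw [cfc_add (a := C) .., cfc_const_one ℝ C, cfc_id' ℝ C]
  rw [h, hC.1.cfc_eq]
  simp only [IsHermitian.cfc, Unitary.conjStarAlgAut_apply, det_mul, det_diagonal]
  rw [mul_right_comm, ← det_mul, Unitary.mul_star_self_of_mem (Subtype.property _), det_one,
    one_mul]
  refine Finset.one_le_prod fun i _ => ?_
  simpa using hC.eigenvalues_nonneg i

lemma PosDef.det_le_det_add {A B : Matrix n n 𝕜} (hA : A.PosDef) (hB : B.PosSemidef) :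
    A.det ≤ (A + B).det := by
  set S := CFC.sqrt A
  have hS : S.PosSemidef := (CFC.sqrt_nonneg A).posSemidef
  have hSS : S * S = A := CFC.sqrt_mul_sqrt_self A hA.posSemidef.nonneg
  have hSdet : IsUnit S.det :=
    (isUnit_iff_isUnit_det S).mp ((CFC.isUnit_sqrt_iff A hA.posSemidef.nonneg).mpr hA.isUnit)
  have hC : (S⁻¹ * B * S⁻¹).PosSemidef := by
    simpa [conjTranspose_nonsing_inv, hS.1.eq] using hB.conjTranspose_mul_mul_same S⁻¹
  have hsplit : A + B = S * (1 + S⁻¹ * B * S⁻¹) * S := by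
    rw [mul_add, add_mul, mul_one, hSS, ← mul_assoc, ← mul_assoc, mul_nonsing_inv _ hSdet,
      one_mul, mul_assoc, nonsing_inv_mul _ hSdet, mul_one]
  calc A.det = A.det * 1 := (mul_one _).symm
    _ ≤ A.det * (1 + S⁻¹ * B * S⁻¹).det :=
        mul_le_mul_of_nonneg_left hC.one_le_det_one_add hA.posSemidef.det_nonneg
    _ = (A + B).det := by rw [hsplit, det_mul, det_mul, ← hSS, det_mul]; ring

lemma PosSemidef.det_le_det_add {A B : Matrix n n 𝕜} (hA : A.PosSemidef)
    (hB : B.PosSemidef) : A.det ≤ (A + B).det := by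
  by_cases hAdef : A.PosDef
  · exact hAdef.det_le_det_add hB
  · rw [hA.posDef_iff_det_ne_zero, not_not] at hAdef
    rw [hAdef]
    exact (hA.add hB).det_nonneg

end Matrix

lemma cent_isHermitian {n : ℕ} (lam : Fin n → ℝ) {A : Matrix (Fin n) (Fin n) ℂ}
    (hA : A.IsHermitian) : (cent lam A).IsHermitian := by
  have hD : (Dmat lam).IsHermitian := isHermitian_diagonal_of_self_adjoint _ (by ext k; simp)
  have htr : IsSelfAdjoint (Dmat lam * A).trace := by
    rw [IsSelfAdjoint, ← trace_conjTranspose, conjTranspose_mul, hA.eq, hD.eq, trace_mul_comm]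
  exact hA.sub (isHermitian_one.smul htr)

lemma covM_add {n N : ℕ} (lam : Fin n → ℝ) (g₁ g₂ : ℝ → ℝ → ℝ)
    (A : Fin N → Matrix (Fin n) (Fin n) ℂ) :
    covM lam (g₁ + g₂) A = covM lam g₁ A + covM lam g₂ A := by
  ext i j
  simp only [covM, of_apply, Matrix.add_apply, Pi.add_apply, Complex.ofReal_add, add_mul,
    Finset.sum_add_distrib]

lemma covM_eq_sum_vecMulVec {n N : ℕ} (lam : Fin n → ℝ) (g : ℝ → ℝ → ℝ)
    {A : Fin N → Matrix (Fin n) (Fin n) ℂ} (hA : ∀ a, (A a).IsHermitian) :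
    covM lam g A = ∑ k, ∑ l, (g (lam k) (lam l) : ℂ) •
      vecMulVec (fun i => cent lam (A i) l k) (star fun i => cent lam (A i) l k) := by
  ext i j
  simp only [covM, of_apply, Matrix.sum_apply, Matrix.smul_apply, vecMulVec_apply,
    Pi.star_apply, (cent_isHermitian lam (hA j)).apply, smul_eq_mul, mul_assoc]

lemma covM_posSemidef {n N : ℕ} (lam : Fin n → ℝ) {g : ℝ → ℝ → ℝ}
    (hg : ∀ k l, 0 ≤ g (lam k) (lam l))
    {A : Fin N → Matrix (Fin n) (Fin n) ℂ} (hA : ∀ a, (A a).IsHermitian) :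
    (covM lam g A).PosSemidef := by
  rw [covM_eq_sum_vecMulVec lam g hA]
  exact posSemidef_sum _ fun k _ => posSemidef_sum _ fun l _ =>
    (posSemidef_vecMulVec_self_star _).smul (Complex.zero_le_real.mpr (hg k l))

lemma IsFzero.nonneg {f : ℝ → ℝ} {f0 : ℝ} (hf0 : IsFzero f f0)
    (hf : ∀ x, 0 < x → 0 < f x) : 0 ≤ f0 :=
  ge_of_tendsto hf0 <| eventually_nhdsWithin_of_forall fun x hx => (hf x hx).le

lemma mfun_pos {f : ℝ → ℝ} (hf : ∀ x, 0 < x → 0 < f x) {x y : ℝ} (hx : 0 < x) (hy : 0 < y) :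
    0 < mfun f x y :=
  mul_pos hy (hf _ (div_pos hx hy))

lemma gas_nonneg {f : ℝ → ℝ} {f0 x y : ℝ} (hf0 : 0 ≤ f0) (hm : 0 ≤ mfun f x y) :
    0 ≤ gas f f0 x y := by
  unfold gas
  positivity

lemma gs_sub_gas (f : ℝ → ℝ) (f0 x y : ℝ) :
    gs f f0 x y - gas f f0 x y = 2 * f0 * x * y / mfun f x y := by
  rw [gs, gas, div_sub_div_same, mul_comm 2 (mfun f x y), ← div_div]
  ring

lemma gs_sub_gas_nonneg {f : ℝ → ℝ} {f0 x y : ℝ} (hf0 : 0 ≤ f0) (hx : 0 ≤ x) (hy : 0 ≤ y)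
    (hm : 0 ≤ mfun f x y) : 0 ≤ gs f f0 x y - gas f f0 x y := by
  rw [gs_sub_gas]
  positivity

theorem det_qCov_s_ge_det_qCov_as_general (n N : ℕ) (lam : Fin n → ℝ)
    (hlam : ∀ k, 0 < lam k)
    (f : ℝ → ℝ) (hf : IsFop f) (f0 : ℝ) (hf0 : IsFzero f f0)
    (A : Fin N → Matrix (Fin n) (Fin n) ℂ) (hA : ∀ a, (A a).IsHermitian) :
    (covM lam (gas f f0) A).det.re ≤ (covM lam (gs f f0) A).det.re := by
  have hf0_nonneg : 0 ≤ f0 := hf0.nonneg hf.pos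
  have hm : ∀ k l, 0 ≤ mfun f (lam k) (lam l) := fun k l =>
    (mfun_pos hf.pos (hlam k) (hlam l)).le
  have has : (covM lam (gas f f0) A).PosSemidef :=
    covM_posSemidef lam (fun k l => gas_nonneg hf0_nonneg (hm k l)) hA
  have hdiff : (covM lam (gs f f0 - gas f f0) A).PosSemidef :=
    covM_posSemidef lam
      (fun k l => gs_sub_gas_nonneg hf0_nonneg (hlam k).le (hlam l).le (hm k l)) hA
  have hsplit :
      covM lam (gs f f0) A = covM lam (gas f f0) A + covM lam (gs f f0 - gas f f0) A := by
    rw [← covM_add, add_sub_cancel]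
  rw [hsplit]
  exact (Complex.le_def.mp (has.det_le_det_add hdiff)).1

/-- `det(qCov^{s}_{D,f}) ≥ det(qCov^{as}_{D,f})`. -/
theorem det_qCov_s_ge_det_qCov_as (n N : ℕ) (lam : Fin n → ℝ)
    (hlam : ∀ k, 0 < lam k) (hsum : ∑ k, lam k = 1)
    (f : ℝ → ℝ) (hf : IsFop f) (f0 : ℝ) (hf0 : IsFzero f f0)
    (A : Fin N → Matrix (Fin n) (Fin n) ℂ) (hA : ∀ a, (A a).IsHermitian) :
    (covM lam (gas f f0) A).det.re ≤ (covM lam (gs f f0) A).det.re :=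
  det_qCov_s_ge_det_qCov_as_general n N lam hlam f hf f0 hf0 A hA
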